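/- Let d ≥ 3, let H be a d×d positive semidefinite Hermitian complex matrix whose smallest eigenvalue equals 0, let E > 0, and let W be a d×d complex matrix. Then for every k ≥ 1 and every unit vector Ψ ∈ ℂ^d ⊗ ℂ^k satisfying ⟨Ψ, (H ⊗ I_k)Ψ⟩ ≤ E, there exists a unit vector ψ ∈ ℂ^d with ⟨ψ, Hψ⟩ ≤ E and |⟨ψ, Wψ⟩| ≤ |⟨Ψ, (W ⊗ I_k)Ψ⟩|. In particular, the infimum of |⟨Ψ,(W⊗I_k)Ψ⟩| over all ancilla dimensions k and all energy-constrained bipartite unit vectors Ψ equals the infimum of |⟨ψ,Wψ⟩| over energy-constrained unit vectors ψ ∈ ℂ^d. -/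

import Mathlib

/-!
Write `Ψ = ∑_b ψ_b ⊗ e_b`, so that every expectation `⟨Ψ, (X ⊗ I) Ψ⟩` equals
`∑_b ⟨ψ_b, X ψ_b⟩`. It suffices to merge two vectors `a, b` into one vector `c` with the same
squared norm and the same `W`-expectation and no larger `H`-energy; induction then merges all
the `ψ_b`.

For independent `a, b` write `c = z₀ a + z₁ b`: with `G, A, B` the Gram matrices of `1, W, H` on
`(a, b)`, we need a rank-one `P = z z*` with `tr (G P) = tr G`, `tr (A P) = tr A` and
`Re tr (B P) ≤ Re tr B`. Three real linear conditions on the four-dimensional real space of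
`2 × 2` Hermitian matrices leave a direction `D ≠ 0` with `tr (G D) = tr (A D) = 0`, and
`tr (G D) = 0` with `G > 0` forces `det D < 0`. Hence `det (1 + t D)` is a quadratic in `t` with
roots of both signs; at either root `1 + t D` is rank one and positive, and one of the two signs
does not increase `Re tr (B P)`. Dependent `a, b` are multiples of one vector and merge trivially.

Conversely an ancilla of dimension one embeds the unentangled problem, so the infima agree.
-/

open Matrix
open scoped ComplexOrder Kronecker

lemma dotProduct_mulVec_eq_trace_mul_vecMulVec {n R : Type*} [Fintype n] [CommSemiring R]
    [StarRing R] (X : Matrix n n R) (z : n → R) :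
    star z ⬝ᵥ (X *ᵥ z) = trace (X * vecMulVec z (star z)) := by
  rw [mul_vecMulVec, trace_vecMulVec, dotProduct_comm]

lemma dotProduct_conjTranspose_mul_mul_mulVec {m n R : Type*} [Fintype m] [Fintype n]
    [CommSemiring R] [StarRing R] (V : Matrix m n R) (X : Matrix m m R) (z : n → R) :
    star z ⬝ᵥ ((Vᴴ * X * V) *ᵥ z) = star (V *ᵥ z) ⬝ᵥ (X *ᵥ (V *ᵥ z)) := by
  rw [star_mulVec, ← mulVec_mulVec, ← mulVec_mulVec, dotProduct_mulVec]

lemma trace_conjTranspose_mul_mul {m n R : Type*} [Fintype m] [Fintype n] [CommSemiring R]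
    [StarRing R] (V : Matrix m n R) (X : Matrix m m R) :
    trace (Vᴴ * X * V) = ∑ j, star (V.col j) ⬝ᵥ (X *ᵥ V.col j) := by
  simp only [trace, diag, mul_apply, dotProduct, mulVec, col_apply, conjTranspose_apply,
    Pi.star_apply, Finset.sum_mul, Finset.mul_sum]
  refine Finset.sum_congr rfl fun j _ => ?_
  rw [Finset.sum_comm]
  exact Finset.sum_congr rfl fun i _ => Finset.sum_congr rfl fun k _ => by ring

lemma dotProduct_kronecker_one_mulVec {m n R : Type*} [Fintype m] [Fintype n] [DecidableEq n]
    [CommSemiring R] [StarRing R] (X : Matrix m m R) (Ψ : m × n → R) :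
    star Ψ ⬝ᵥ ((X ⊗ₖ (1 : Matrix n n R)) *ᵥ Ψ) =
      ∑ b, star (fun i => Ψ (i, b)) ⬝ᵥ (X *ᵥ fun i => Ψ (i, b)) := by
  simp only [dotProduct, Pi.star_apply, mulVec, kroneckerMap_apply, one_apply, mul_ite, mul_one,
    mul_zero, ite_mul, zero_mul, Fintype.sum_prod_type, Finset.sum_ite_eq, Finset.mem_univ,
    ↓reduceIte, Finset.mul_sum]
  exact Finset.sum_comm

lemma dotProduct_kronecker_one_mulVec_fin_one {m R : Type*} [Fintype m] [CommSemiring R]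
    [StarRing R] (X : Matrix m m R) (ψ : m → R) :
    star (fun p : m × Fin 1 => ψ p.1) ⬝ᵥ
        ((X ⊗ₖ (1 : Matrix (Fin 1) (Fin 1) R)) *ᵥ fun p => ψ p.1) = star ψ ⬝ᵥ (X *ᵥ ψ) := by
  simp [dotProduct_kronecker_one_mulVec]

lemma star_smul_dotProduct_mulVec_smul {n : Type*} [Fintype n] (X : Matrix n n ℂ) (u : n → ℂ)
    (γ : ℂ) :
    star (γ • u) ⬝ᵥ (X *ᵥ (γ • u)) = Complex.normSq γ * (star u ⬝ᵥ (X *ᵥ u)) := by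
  simp only [mulVec_smul, star_smul, dotProduct_smul, smul_dotProduct, smul_eq_mul,
    Complex.normSq_eq_conj_mul_self, RCLike.star_def]
  ring

lemma exists_eq_smul_of_not_linearIndependent {K V : Type*} [Field K] [AddCommGroup V]
    [Module K V] {a b : V} (hab : ¬LinearIndependent K ![a, b]) :
    ∃ (u : V) (α β : K), a = α • u ∧ b = β • u := by
  rw [LinearIndependent.pair_iff] at hab
  push Not at hab
  obtain ⟨s, t, hst, hne⟩ := hab
  by_cases hs : s = 0
  · subst hs
    have hb : b = 0 := (smul_eq_zero.mp (by simpa using hst)).resolve_left (hne rfl)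
    exact ⟨a, 1, 0, by simp, by simp [hb]⟩
  · refine ⟨b, -t / s, 1, smul_right_injective V hs ?_, by simp⟩
    change s • a = s • ((-t / s) • b)
    rw [smul_smul, mul_div_cancel₀ _ hs, neg_smul, eq_neg_iff_add_eq_zero, hst]

lemma exists_quadratic_eq_zero_mul_nonpos {a b c : ℝ} (ha : a < 0) (hc : 0 ≤ c) (s : ℝ) :
    ∃ t, a * (t * t) + b * t + c = 0 ∧ t * s ≤ 0 := by
  have hdisc : b ^ 2 ≤ discrim a b c := by rw [discrim]; nlinarith
  set σ := √(discrim a b c)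
  have hσ : discrim a b c = σ * σ := (Real.mul_self_sqrt ((sq_nonneg b).trans hdisc)).symm
  have hbσ : |b| ≤ σ := Real.abs_le_sqrt hdisc
  have hroot := quadratic_eq_zero_iff ha.ne hσ
  by_cases hs : 0 ≤ s
  · refine ⟨(-b + σ) / (2 * a), (hroot _).mpr (.inl rfl), mul_nonpos_of_nonpos_of_nonneg ?_ hs⟩
    exact div_nonpos_of_nonneg_of_nonpos (by linarith [le_abs_self b]) (by linarith)
  · refine ⟨(-b - σ) / (2 * a), (hroot _).mpr (.inr rfl),
      mul_nonpos_of_nonneg_of_nonpos ?_ (by linarith)⟩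
    exact div_nonneg_of_nonpos (by linarith [neg_abs_le b]) (by linarith)

lemma eq_zero_of_sq_add_sq_le_mul {g₀ g₁ u v α δ p q : ℝ} (hg₀ : 0 < g₀)
    (hg : u ^ 2 + v ^ 2 < g₀ * g₁) (htr : g₀ * α + g₁ * δ + 2 * (u * p + v * q) = 0)
    (hD : p ^ 2 + q ^ 2 ≤ α * δ) : α = 0 ∧ δ = 0 ∧ p = 0 ∧ q = 0 := by
  have hαδ : 0 ≤ α * δ := by nlinarith
  have hcs : (u * p + v * q) ^ 2 ≤ (u ^ 2 + v ^ 2) * (α * δ) := by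
    nlinarith [sq_nonneg (u * q - v * p),
      mul_le_mul_of_nonneg_left hD (add_nonneg (sq_nonneg u) (sq_nonneg v))]
  have hamgm : 4 * (g₀ * g₁) * (α * δ) ≤ (g₀ * α + g₁ * δ) ^ 2 := by
    nlinarith [sq_nonneg (g₀ * α - g₁ * δ)]
  have hsq : (g₀ * α + g₁ * δ) ^ 2 = 4 * (u * p + v * q) ^ 2 := by
    rw [show g₀ * α + g₁ * δ = -(2 * (u * p + v * q)) by linarith]; ring
  have h0 : α * δ = 0 := by
    by_contra h
    nlinarith [mul_lt_mul_of_pos_right hg (lt_of_le_of_ne hαδ (Ne.symm h))]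
  have hp : p = 0 := by nlinarith
  have hq : q = 0 := by nlinarith
  have hg₁ : 0 < g₁ := by nlinarith
  subst hp hq
  have hα : α = 0 := by
    have : g₀ * α ^ 2 = 0 := by linear_combination α * htr - g₁ * h0
    simpa [hg₀.ne'] using this
  subst hα
  have hδ : g₁ * δ = 0 := by linear_combination htr
  exact ⟨rfl, by simpa [hg₁.ne'] using hδ, rfl, rfl⟩

def hermitianFinTwo : ℝ × ℝ × ℂ →ₗ[ℝ] Matrix (Fin 2) (Fin 2) ℂ where
  toFun x := !![(x.1 : ℂ), x.2.2; star x.2.2, (x.2.1 : ℂ)]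
  map_add' x y := by ext i j; fin_cases i <;> fin_cases j <;> simp
  map_smul' r x := by ext i j; fin_cases i <;> fin_cases j <;> simp [Complex.real_smul]

lemma hermitianFinTwo_apply (α δ : ℝ) (β : ℂ) :
    hermitianFinTwo (α, δ, β) = !![(α : ℂ), β; star β, (δ : ℂ)] := rfl

lemma hermitianFinTwo_one_one_zero : hermitianFinTwo (1, 1, 0) = 1 := by
  ext i j; fin_cases i <;> fin_cases j <;> simp [hermitianFinTwo]

lemma trace_mul_hermitianFinTwo (X : Matrix (Fin 2) (Fin 2) ℂ) (α δ : ℝ) (β : ℂ) :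
    trace (X * hermitianFinTwo (α, δ, β)) =
      X 0 0 * α + X 0 1 * star β + X 1 0 * β + X 1 1 * δ := by
  rw [hermitianFinTwo_apply, trace_fin_two, mul_apply, mul_apply, Fin.sum_univ_two,
    Fin.sum_univ_two]
  simp only [of_apply, cons_val', cons_val_zero, cons_val_one, cons_val_fin_one]
  ring

lemma exists_hermitianFinTwo_trace_mul_eq_zero {G : Matrix (Fin 2) (Fin 2) ℂ}
    (hG : G.IsHermitian) (A : Matrix (Fin 2) (Fin 2) ℂ) :
    ∃ x : ℝ × ℝ × ℂ, x ≠ 0 ∧ trace (G * hermitianFinTwo x) = 0 ∧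
      trace (A * hermitianFinTwo x) = 0 := by
  let L : ℝ × ℝ × ℂ →ₗ[ℝ] ℝ × ℂ :=
    (Complex.reLm ∘ₗ traceLinearMap (Fin 2) ℝ ℂ ∘ₗ LinearMap.mulLeft ℝ G ∘ₗ hermitianFinTwo).prod
      (traceLinearMap (Fin 2) ℝ ℂ ∘ₗ LinearMap.mulLeft ℝ A ∘ₗ hermitianFinTwo)
  have hker : LinearMap.ker L ≠ ⊥ :=
    LinearMap.ker_ne_bot_of_finrank_lt (by simp [Complex.finrank_real_complex])
  obtain ⟨⟨α, δ, β⟩, hx, hne⟩ := (Submodule.ne_bot_iff _).mp hker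
  simp only [LinearMap.mem_ker, Prod.ext_iff, L] at hx
  refine ⟨(α, δ, β), hne, ?_, by simpa using hx.2⟩
  have h00 : (G 0 0).im = 0 := Complex.conj_eq_iff_im.mp (hG.apply 0 0)
  have h11 : (G 1 1).im = 0 := Complex.conj_eq_iff_im.mp (hG.apply 1 1)
  apply Complex.ext
  · simpa using hx.1
  · rw [trace_mul_hermitianFinTwo, ← hG.apply 1 0]
    simp only [Complex.add_im, Complex.mul_im, Complex.ofReal_re, Complex.ofReal_im, h00, h11,
      RCLike.star_def, Complex.conj_re, Complex.conj_im, Complex.zero_im]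
    ring

lemma mul_lt_normSq_of_trace_mul_hermitianFinTwo_eq_zero {G : Matrix (Fin 2) (Fin 2) ℂ}
    (hG : G.PosDef) {α δ : ℝ} {β : ℂ} (hne : (α, δ, β) ≠ 0)
    (htr : trace (G * hermitianFinTwo (α, δ, β)) = 0) : α * δ < Complex.normSq β := by
  obtain ⟨g₀_pos, g₀_im⟩ := Complex.pos_iff.mp (hG.diag_pos (i := 0))
  have g₁_im : (G 1 1).im = 0 := Complex.conj_eq_iff_im.mp (hG.isHermitian.apply 1 1)
  have hdet := (Complex.pos_iff.mp hG.det_pos).1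
  rw [det_fin_two, ← hG.isHermitian.apply 1 0] at hdet
  rw [trace_mul_hermitianFinTwo, ← hG.isHermitian.apply 1 0] at htr
  have htr' := congrArg Complex.re htr
  simp only [RCLike.star_def, Complex.sub_re, Complex.mul_re, ← g₀_im, g₁_im, mul_zero, sub_zero,
    Complex.conj_re, Complex.conj_im, mul_neg, sub_neg_eq_add, sub_pos, Complex.add_re,
    Complex.ofReal_re, Complex.ofReal_im, neg_mul, Complex.zero_re] at hdet htr'
  by_contra! hD
  rw [Complex.normSq_apply] at hD
  obtain ⟨rfl, rfl, hp, hq⟩ := eq_zero_of_sq_add_sq_le_mul (u := (G 0 1).re) (v := (G 0 1).im)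
    (α := α) (δ := δ) (p := β.re) (q := β.im) g₀_pos (by simpa only [sq] using hdet)
    (by linarith) (by simpa only [sq] using hD)
  exact hne (by simpa [Complex.ext_iff] using ⟨hp, hq⟩)

lemma exists_hermitianFinTwo_eq_vecMulVec {x y : ℝ} {w : ℂ} (hdet : x * y = Complex.normSq w)
    (htr : 0 ≤ x + y) : ∃ z : Fin 2 → ℂ, hermitianFinTwo (x, y, w) = vecMulVec z (star z) := by
  have hx : 0 ≤ x := by nlinarith [Complex.normSq_nonneg w]
  have hy : 0 ≤ y := by nlinarith [Complex.normSq_nonneg w]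
  rcases hx.eq_or_lt with rfl | hx
  · have hw : w = 0 := Complex.normSq_eq_zero.mp (by linarith)
    have hsy : ((√y : ℝ) : ℂ) * (√y : ℝ) = y := by exact_mod_cast Real.mul_self_sqrt hy
    refine ⟨![0, (√y : ℂ)], ?_⟩
    ext i j
    fin_cases i <;> fin_cases j <;> simp [hermitianFinTwo_apply, hw, vecMulVec_apply, hsy]
  · have hsx : ((√x : ℝ) : ℂ) * (√x : ℝ) = x := by exact_mod_cast Real.mul_self_sqrt hx.le
    have hs0 : ((√x : ℝ) : ℂ) ≠ 0 := by exact_mod_cast (Real.sqrt_pos.mpr hx).ne'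
    have hy : (y : ℂ) = starRingEnd ℂ w / √x * (w / √x) := by
      rw [div_mul_div_comm, mul_comm (√x : ℂ), hsx, eq_div_iff (by exact_mod_cast hx.ne'),
        ← Complex.normSq_eq_conj_mul_self, ← hdet]
      push_cast; ring
    refine ⟨![(√x : ℂ), star w / √x], ?_⟩
    ext i j
    fin_cases i <;> fin_cases j <;>
      simp [hermitianFinTwo_apply, vecMulVec_apply, hsx, hs0, mul_div_cancel₀, hy]

lemma exists_dotProduct_mulVec_eq_trace {G : Matrix (Fin 2) (Fin 2) ℂ} (hG : G.PosDef)
    (A B : Matrix (Fin 2) (Fin 2) ℂ) :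
    ∃ z : Fin 2 → ℂ, star z ⬝ᵥ (G *ᵥ z) = trace G ∧ star z ⬝ᵥ (A *ᵥ z) = trace A ∧
      (star z ⬝ᵥ (B *ᵥ z)).re ≤ (trace B).re := by
  obtain ⟨⟨α, δ, β⟩, hne, hG0, hA0⟩ :=
    exists_hermitianFinTwo_trace_mul_eq_zero hG.isHermitian A
  set D := hermitianFinTwo (α, δ, β)
  have hdet := mul_lt_normSq_of_trace_mul_hermitianFinTwo_eq_zero hG hne hG0
  obtain ⟨t, hroot, hsign⟩ := exists_quadratic_eq_zero_mul_nonpos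
    (a := α * δ - Complex.normSq β) (b := α + δ) (by linarith) zero_le_one (trace (B * D)).re
  obtain ⟨z, hz⟩ := exists_hermitianFinTwo_eq_vecMulVec (x := 1 + t * α) (y := 1 + t * δ)
    (w := t * β) (by rw [Complex.normSq_mul, Complex.normSq_ofReal]; linear_combination hroot)
    (by nlinarith)
  have hP : hermitianFinTwo (1 + t * α, 1 + t * δ, t * β) = 1 + t • D := by
    rw [← hermitianFinTwo_one_one_zero, ← map_smul, ← map_add]
    simp
  have key : ∀ X, star z ⬝ᵥ (X *ᵥ z) = trace X + t * trace (X * D) := by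
    intro X
    rw [dotProduct_mulVec_eq_trace_mul_vecMulVec, ← hz, hP, mul_add, mul_one, trace_add,
      Matrix.mul_smul, trace_smul, Complex.real_smul]
  refine ⟨z, by rw [key, hG0, mul_zero, add_zero], by rw [key, hA0, mul_zero, add_zero], ?_⟩
  rw [key, Complex.add_re, Complex.re_ofReal_mul]
  linarith

section Merge

variable {n : Type*} [Fintype n]

lemma exists_merge_of_eq_smul (u : n → ℂ) (α β : ℂ) :
    ∃ c : n → ℂ, ∀ X : Matrix n n ℂ, star c ⬝ᵥ (X *ᵥ c) =
      star (α • u) ⬝ᵥ (X *ᵥ (α • u)) + star (β • u) ⬝ᵥ (X *ᵥ (β • u)) := by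
  refine ⟨(√(Complex.normSq α + Complex.normSq β) : ℂ) • u, fun X => ?_⟩
  simp only [star_smul_dotProduct_mulVec_smul, Complex.normSq_ofReal,
    Real.mul_self_sqrt (add_nonneg (Complex.normSq_nonneg α) (Complex.normSq_nonneg β))]
  push_cast; ring

lemma exists_merge_of_linearIndependent [DecidableEq n] {a b : n → ℂ}
    (hab : LinearIndependent ℂ ![a, b]) (W H : Matrix n n ℂ) :
    ∃ c : n → ℂ, star c ⬝ᵥ c = star a ⬝ᵥ a + star b ⬝ᵥ b ∧
      star c ⬝ᵥ (W *ᵥ c) = star a ⬝ᵥ (W *ᵥ a) + star b ⬝ᵥ (W *ᵥ b) ∧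
      (star c ⬝ᵥ (H *ᵥ c)).re ≤ (star a ⬝ᵥ (H *ᵥ a)).re + (star b ⬝ᵥ (H *ᵥ b)).re := by
  let V : Matrix n (Fin 2) ℂ := (of ![a, b])ᵀ
  have hV : Function.Injective V.mulVec := mulVec_injective_iff.mpr hab
  have htrace : ∀ X, trace (Vᴴ * X * V) = star a ⬝ᵥ (X *ᵥ a) + star b ⬝ᵥ (X *ᵥ b) := by
    simp [trace_conjTranspose_mul_mul, Fin.sum_univ_two, V]
  obtain ⟨z, h1, hW, hH⟩ := exists_dotProduct_mulVec_eq_trace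
    (PosDef.conjTranspose_mul_self V hV) (Vᴴ * W * V) (Vᴴ * H * V)
  rw [← Matrix.mul_one Vᴴ] at h1
  simp only [dotProduct_conjTranspose_mul_mul_mulVec, htrace, one_mulVec] at h1 hW hH
  exact ⟨V *ᵥ z, h1, hW, by rwa [← Complex.add_re]⟩

lemma exists_merge [DecidableEq n] (W H : Matrix n n ℂ) (a b : n → ℂ) :
    ∃ c : n → ℂ, star c ⬝ᵥ c = star a ⬝ᵥ a + star b ⬝ᵥ b ∧
      star c ⬝ᵥ (W *ᵥ c) = star a ⬝ᵥ (W *ᵥ a) + star b ⬝ᵥ (W *ᵥ b) ∧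
      (star c ⬝ᵥ (H *ᵥ c)).re ≤ (star a ⬝ᵥ (H *ᵥ a)).re + (star b ⬝ᵥ (H *ᵥ b)).re := by
  by_cases hab : LinearIndependent ℂ ![a, b]
  · exact exists_merge_of_linearIndependent hab W H
  · obtain ⟨u, α, β, rfl, rfl⟩ := exists_eq_smul_of_not_linearIndependent hab
    obtain ⟨c, hc⟩ := exists_merge_of_eq_smul u α β
    exact ⟨c, by simpa using hc 1, hc W, by rw [hc H, Complex.add_re]⟩

lemma exists_merge_finset [DecidableEq n] (W H : Matrix n n ℂ) {ι : Type*} (s : Finset ι)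
    (f : ι → n → ℂ) :
    ∃ c : n → ℂ, star c ⬝ᵥ c = ∑ i ∈ s, star (f i) ⬝ᵥ f i ∧
      star c ⬝ᵥ (W *ᵥ c) = ∑ i ∈ s, star (f i) ⬝ᵥ (W *ᵥ f i) ∧
      (star c ⬝ᵥ (H *ᵥ c)).re ≤ ∑ i ∈ s, (star (f i) ⬝ᵥ (H *ᵥ f i)).re := by
  induction s using Finset.cons_induction with
  | empty => exact ⟨0, by simp, by simp, by simp⟩
  | cons j s hj ih =>
    obtain ⟨c', h1, hW, hH⟩ := ih
    obtain ⟨c, g1, gW, gH⟩ := exists_merge W H (f j) c'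
    refine ⟨c, ?_, ?_, ?_⟩
    · rw [g1, h1, Finset.sum_cons]
    · rw [gW, hW, Finset.sum_cons]
    · rw [Finset.sum_cons]
      linarith

end Merge

lemma exists_dotProduct_mulVec_eq_kronecker_one {m k : Type*} [Fintype m] [DecidableEq m]
    [Fintype k] [DecidableEq k] (W H : Matrix m m ℂ) (Ψ : m × k → ℂ) :
    ∃ ψ : m → ℂ, star ψ ⬝ᵥ ψ = star Ψ ⬝ᵥ Ψ ∧
      star ψ ⬝ᵥ (W *ᵥ ψ) = star Ψ ⬝ᵥ ((W ⊗ₖ (1 : Matrix k k ℂ)) *ᵥ Ψ) ∧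
      (star ψ ⬝ᵥ (H *ᵥ ψ)).re ≤ (star Ψ ⬝ᵥ ((H ⊗ₖ (1 : Matrix k k ℂ)) *ᵥ Ψ)).re := by
  obtain ⟨ψ, h1, hW, hH⟩ := exists_merge_finset W H Finset.univ fun b i => Ψ (i, b)
  have hnorm := dotProduct_kronecker_one_mulVec (1 : Matrix m m ℂ) Ψ
  simp only [one_kronecker_one, one_mulVec] at hnorm
  refine ⟨ψ, by rw [h1, hnorm], by rw [hW, dotProduct_kronecker_one_mulVec], ?_⟩
  rwa [dotProduct_kronecker_one_mulVec, Complex.re_sum]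

theorem energy_constrained_no_ancilla_general
    (d : ℕ)
    (H : Matrix (Fin d) (Fin d) ℂ)
    (E : ℝ)
    (W : Matrix (Fin d) (Fin d) ℂ) :
    (∀ (k : ℕ), 1 ≤ k → ∀ Ψ : Fin d × Fin k → ℂ,
      star Ψ ⬝ᵥ Ψ = 1 →
      (star Ψ ⬝ᵥ ((H ⊗ₖ (1 : Matrix (Fin k) (Fin k) ℂ)) *ᵥ Ψ)).re ≤ E →
      ∃ ψ : Fin d → ℂ, star ψ ⬝ᵥ ψ = 1 ∧ (star ψ ⬝ᵥ (H *ᵥ ψ)).re ≤ E ∧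
        ‖star ψ ⬝ᵥ (W *ᵥ ψ)‖ ≤
          ‖star Ψ ⬝ᵥ ((W ⊗ₖ (1 : Matrix (Fin k) (Fin k) ℂ)) *ᵥ Ψ)‖)
    ∧
    sInf {x : ℝ | ∃ (k : ℕ) (Ψ : Fin d × Fin k → ℂ), 1 ≤ k ∧
        star Ψ ⬝ᵥ Ψ = 1 ∧
        (star Ψ ⬝ᵥ ((H ⊗ₖ (1 : Matrix (Fin k) (Fin k) ℂ)) *ᵥ Ψ)).re ≤ E ∧
        x = ‖star Ψ ⬝ᵥ ((W ⊗ₖ (1 : Matrix (Fin k) (Fin k) ℂ)) *ᵥ Ψ)‖}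
      = sInf {x : ℝ | ∃ ψ : Fin d → ℂ, star ψ ⬝ᵥ ψ = 1 ∧
        (star ψ ⬝ᵥ (H *ᵥ ψ)).re ≤ E ∧ x = ‖star ψ ⬝ᵥ (W *ᵥ ψ)‖} := by
  refine ⟨fun k _ Ψ hΨ hE => ?_, csInf_eq_csInf_of_forall_exists_le ?_ ?_⟩
  · obtain ⟨ψ, h1, hW, hH⟩ := exists_dotProduct_mulVec_eq_kronecker_one W H Ψ
    exact ⟨ψ, h1.trans hΨ, hH.trans hE, by rw [hW]⟩
  · rintro x ⟨k, Ψ, -, hΨ, hE, rfl⟩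
    obtain ⟨ψ, h1, hW, hH⟩ := exists_dotProduct_mulVec_eq_kronecker_one W H Ψ
    exact ⟨_, ⟨ψ, h1.trans hΨ, hH.trans hE, rfl⟩, by rw [hW]⟩
  · rintro x ⟨ψ, h1, hE, rfl⟩
    refine ⟨_, ⟨1, fun p => ψ p.1, le_rfl, ?_, ?_, rfl⟩, ?_⟩
    · simpa [one_kronecker_one, h1] using dotProduct_kronecker_one_mulVec_fin_one 1 ψ
    · rwa [dotProduct_kronecker_one_mulVec_fin_one]
    · rw [dotProduct_kronecker_one_mulVec_fin_one]

/-- **Entanglement does not help in energy-constrained discrimination of unitaries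
(finite dimensions).**  For a grounded Hamiltonian `H`, every energy-constrained bipartite
unit vector `Ψ` admits an energy-constrained unit vector `ψ` on the first factor with
`|⟨ψ, W ψ⟩| ≤ |⟨Ψ, (W ⊗ I) Ψ⟩|`; consequently the two constrained infima coincide. -/
theorem energy_constrained_no_ancilla
    (d : ℕ) (hd : 3 ≤ d)
    (H : Matrix (Fin d) (Fin d) ℂ) (hH : H.PosSemidef)
    (hground : ∃ v : Fin d → ℂ, v ≠ 0 ∧ H *ᵥ v = 0)
    (E : ℝ) (hE : 0 < E)
    (W : Matrix (Fin d) (Fin d) ℂ) :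
    (∀ (k : ℕ), 1 ≤ k → ∀ Ψ : Fin d × Fin k → ℂ,
      star Ψ ⬝ᵥ Ψ = 1 →
      (star Ψ ⬝ᵥ ((H ⊗ₖ (1 : Matrix (Fin k) (Fin k) ℂ)) *ᵥ Ψ)).re ≤ E →
      ∃ ψ : Fin d → ℂ, star ψ ⬝ᵥ ψ = 1 ∧ (star ψ ⬝ᵥ (H *ᵥ ψ)).re ≤ E ∧
        ‖star ψ ⬝ᵥ (W *ᵥ ψ)‖ ≤
          ‖star Ψ ⬝ᵥ ((W ⊗ₖ (1 : Matrix (Fin k) (Fin k) ℂ)) *ᵥ Ψ)‖)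
    ∧
    sInf {x : ℝ | ∃ (k : ℕ) (Ψ : Fin d × Fin k → ℂ), 1 ≤ k ∧
        star Ψ ⬝ᵥ Ψ = 1 ∧
        (star Ψ ⬝ᵥ ((H ⊗ₖ (1 : Matrix (Fin k) (Fin k) ℂ)) *ᵥ Ψ)).re ≤ E ∧
        x = ‖star Ψ ⬝ᵥ ((W ⊗ₖ (1 : Matrix (Fin k) (Fin k) ℂ)) *ᵥ Ψ)‖}
      = sInf {x : ℝ | ∃ ψ : Fin d → ℂ, star ψ ⬝ᵥ ψ = 1 ∧
        (star ψ ⬝ᵥ (H *ᵥ ψ)).re ≤ E ∧ x = ‖star ψ ⬝ᵥ (W *ᵥ ψ)‖} :=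
  energy_constrained_no_ancilla_general d H E W
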